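/- arXiv:2603.15232 — 2 statements merged into one kernel-verified Lean document; each statement's English description precedes it below -/
import Mathlib

section
/- Let S : Ω → Δ(𝒴) be a measurable random variable, let C := Q_{σ(S)}, and let Q̄ ∈ Δ(𝒴) be the marginal law of Y, i.e. Q̄(y) = P(Y = y). Then E[ℓ(S,Y)] = E_ℓ(Q̄) − E[d_ℓ(Q̄, C)] + E[d_ℓ(S, C)]. -/
/-! Since `S` is `σ(S)`-measurable and `C` is the conditional law of `Y` given `σ(S)`, the pull-out
property of conditional expectation gives `E[ℓ(S,Y)] = E[L(S,C)]`. As `L(p,q)` is linear in `q` and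
`E[C] = Q̄`, also `E[L(Q̄,C)] = E_ℓ(Q̄)`. Expanding both divergences, the two copies of `E[E_ℓ(C)]`
cancel and the identity reduces to these two facts. -/

open MeasureTheory Finset

noncomputable section

/-- The probability simplex on a finite label set `𝒴`, identified with the set of
functions `p : 𝒴 → ℝ` with nonnegative coordinates summing to one. -/
def simplex (𝒴 : Type*) [Fintype 𝒴] : Set (𝒴 → ℝ) :=
  {p | (∀ y, 0 ≤ p y) ∧ ∑ y, p y = 1}

/-- Conditional risk `L(p,q) := ∑_y q(y) ℓ(p,y)`. -/
def condRisk {𝒴 : Type*} [Fintype 𝒴] (ℓ : (𝒴 → ℝ) → 𝒴 → ℝ) (p q : 𝒴 → ℝ) : ℝ :=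
  ∑ y, q y * ℓ p y

/-- Generalized entropy `E_ℓ(q) := L(q,q)`. -/
def gEntropy {𝒴 : Type*} [Fintype 𝒴] (ℓ : (𝒴 → ℝ) → 𝒴 → ℝ) (q : 𝒴 → ℝ) : ℝ :=
  condRisk ℓ q q

/-- Divergence (regret) `d_ℓ(p,q) := L(p,q) - E_ℓ(q)`. -/
def divg {𝒴 : Type*} [Fintype 𝒴] (ℓ : (𝒴 → ℝ) → 𝒴 → ℝ) (p q : 𝒴 → ℝ) : ℝ :=
  condRisk ℓ p q - gEntropy ℓ q

section

variable {𝒴 : Type*} [Fintype 𝒴] {ℓ : (𝒴 → ℝ) → 𝒴 → ℝ}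

lemma abs_condRisk_le {p q : 𝒴 → ℝ} {M : ℝ} (hq : q ∈ simplex 𝒴) (hM : ∀ y, |ℓ p y| ≤ M) :
    |condRisk ℓ p q| ≤ M :=
  calc |condRisk ℓ p q| ≤ ∑ y, |q y * ℓ p y| := abs_sum_le_sum_abs _ _
    _ ≤ ∑ y, q y * M := sum_le_sum fun y _ => by
        rw [abs_mul, abs_of_nonneg (hq.1 y)]
        exact mul_le_mul_of_nonneg_left (hM y) (hq.1 y)
    _ = M := by rw [← sum_mul, hq.2, one_mul]

variable {α : Type*} {mα : MeasurableSpace α} {μ : Measure α}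

lemma measurable_condRisk (hℓ : ∀ y, Measurable fun p => ℓ p y) {p q : α → 𝒴 → ℝ}
    (hp : Measurable p) (hq : Measurable q) : Measurable fun a => condRisk ℓ (p a) (q a) :=
  Finset.measurable_sum _ fun y _ => ((measurable_pi_apply y).comp hq).mul ((hℓ y).comp hp)

lemma integrable_condRisk [IsFiniteMeasure μ] (hℓ : ∀ y, Measurable fun p => ℓ p y)
    {p q : α → 𝒴 → ℝ} (hp : Measurable p) (hq : Measurable q) (hqΔ : ∀ a, q a ∈ simplex 𝒴)
    {M : ℝ} (hM : ∀ a y, |ℓ (p a) y| ≤ M) : Integrable (fun a => condRisk ℓ (p a) (q a)) μ :=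
  .of_bound (measurable_condRisk hℓ hp hq).aestronglyMeasurable M
    (ae_of_all _ fun a => abs_condRisk_le (hqΔ a) (hM a))

lemma integrable_condRisk_const_left (p : 𝒴 → ℝ) {q : α → 𝒴 → ℝ}
    (hq : ∀ y, Integrable (fun a => q a y) μ) : Integrable (fun a => condRisk ℓ p (q a)) μ :=
  integrable_finsetSum _ fun y _ => (hq y).mul_const _

lemma integral_condRisk_const_left (p : 𝒴 → ℝ) {q : α → 𝒴 → ℝ}
    (hq : ∀ y, Integrable (fun a => q a y) μ) :
    ∫ a, condRisk ℓ p (q a) ∂μ = condRisk ℓ p fun y => ∫ a, q a y ∂μ := by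
  simp only [condRisk]
  rw [integral_finsetSum _ fun y _ => (hq y).mul_const _]
  simp_rw [integral_mul_const]

end

section

variable {Ω : Type*} {m mΩ : MeasurableSpace Ω} {μ : Measure Ω} [IsFiniteMeasure μ]

lemma integral_mul_condExp_of_bound (hm : m ≤ mΩ) {f g : Ω → ℝ} (hg : StronglyMeasurable[m] g)
    (hf : Integrable f μ) {c : ℝ} (hgc : ∀ ω, |g ω| ≤ c) :
    ∫ ω, g ω * μ[f | m] ω ∂μ = ∫ ω, g ω * f ω ∂μ := by
  calc ∫ ω, g ω * μ[f | m] ω ∂μ = ∫ ω, μ[g * f | m] ω ∂μ :=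
        integral_congr_ae (condExp_stronglyMeasurable_mul_of_bound hm hg hf c (ae_of_all _ hgc)).symm
    _ = ∫ ω, g ω * f ω ∂μ := integral_condExp hm

theorem integral_loss_eq_integral_condRisk {𝒴 : Type*} [Fintype 𝒴] [MeasurableSpace 𝒴]
    [MeasurableSingletonClass 𝒴] (hm : m ≤ mΩ) {Y : Ω → 𝒴} (hY : Measurable Y)
    {ℓ : (𝒴 → ℝ) → 𝒴 → ℝ} (hℓ : ∀ y, Measurable fun p => ℓ p y) {S C : Ω → 𝒴 → ℝ}
    (hS : Measurable[m] S) {M : ℝ} (hM : ∀ ω y, |ℓ (S ω) y| ≤ M)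
    (hC : ∀ y, (fun ω => C ω y) =ᵐ[μ] μ[{ω | Y ω = y}.indicator (fun _ => (1 : ℝ)) | m]) :
    ∫ ω, ℓ (S ω) (Y ω) ∂μ = ∫ ω, condRisk ℓ (S ω) (C ω) ∂μ := by
  set ind : 𝒴 → Ω → ℝ := fun y => {ω | Y ω = y}.indicator fun _ => 1
  have hind (y : 𝒴) : Integrable (ind y) μ :=
    (integrable_const 1).indicator (hY (measurableSet_singleton y))
  have hℓS (y : 𝒴) : StronglyMeasurable[m] fun ω => ℓ (S ω) y :=
    ((hℓ y).comp hS).stronglyMeasurable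
  have hℓS_bound (y : 𝒴) : ∀ᵐ ω ∂μ, ‖ℓ (S ω) y‖ ≤ M := ae_of_all _ fun ω => hM ω y
  have hC_int (y : 𝒴) : Integrable (fun ω => C ω y) μ := integrable_condExp.congr (hC y).symm
  have hterm (y : 𝒴) : ∫ ω, C ω y * ℓ (S ω) y ∂μ = ∫ ω, ind y ω * ℓ (S ω) y ∂μ :=
    calc ∫ ω, C ω y * ℓ (S ω) y ∂μ = ∫ ω, ℓ (S ω) y * μ[ind y | m] ω ∂μ :=
          integral_congr_ae <| by filter_upwards [hC y] with ω hω using by rw [hω, mul_comm]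
      _ = ∫ ω, ℓ (S ω) y * ind y ω ∂μ := integral_mul_condExp_of_bound hm (hℓS y) (hind y) (hM · y)
      _ = ∫ ω, ind y ω * ℓ (S ω) y ∂μ := by simp_rw [mul_comm]
  calc ∫ ω, ℓ (S ω) (Y ω) ∂μ = ∫ ω, ∑ y, ind y ω * ℓ (S ω) y ∂μ := by
        congr 1 with ω
        classical
        simp [ind, Set.indicator_apply]
    _ = ∑ y, ∫ ω, C ω y * ℓ (S ω) y ∂μ := by
        rw [integral_finsetSum _ fun y _ =>
          (hind y).mul_bdd ((hℓS y).mono hm).aestronglyMeasurable (hℓS_bound y)]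
        simp_rw [hterm]
    _ = ∫ ω, condRisk ℓ (S ω) (C ω) ∂μ := (integral_finsetSum _ fun y _ =>
          (hC_int y).mul_bdd ((hℓS y).mono hm).aestronglyMeasurable (hℓS_bound y)).symm

end

theorem uncertainty_resolution_reliability_general
    {Ω 𝒴 : Type*} [Fintype 𝒴]
    [MeasurableSpace 𝒴] [MeasurableSingletonClass 𝒴]
    {mΩ : MeasurableSpace Ω} {P : Measure Ω} [IsProbabilityMeasure P]
    (Y : Ω → 𝒴) (hY : Measurable Y)
    (ℓ : (𝒴 → ℝ) → 𝒴 → ℝ)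
    (hℓmeas : ∀ y, Measurable fun p : 𝒴 → ℝ => ℓ p y)
    (hℓbdd : ∃ M : ℝ, ∀ p ∈ simplex 𝒴, ∀ y, |ℓ p y| ≤ M)
    (S : Ω → 𝒴 → ℝ) (hSΔ : ∀ ω, S ω ∈ simplex 𝒴) (hSmeas : Measurable S)
    (C : Ω → 𝒴 → ℝ) (hCΔ : ∀ ω, C ω ∈ simplex 𝒴)
    (hCmeas : ∀ y, Measurable[MeasurableSpace.comap S inferInstance] fun ω => C ω y)
    (hCver : ∀ y, (fun ω => C ω y)
      =ᵐ[P] P[Set.indicator {ω | Y ω = y} (fun _ => (1 : ℝ))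
              | MeasurableSpace.comap S inferInstance])
    (Qbar : 𝒴 → ℝ) (hQbar : ∀ y, Qbar y = (P {ω | Y ω = y}).toReal) :
    ∫ ω, ℓ (S ω) (Y ω) ∂P
      = gEntropy ℓ Qbar - ∫ ω, divg ℓ Qbar (C ω) ∂P + ∫ ω, divg ℓ (S ω) (C ω) ∂P := by
  obtain ⟨M, hM⟩ := hℓbdd
  have hm := hSmeas.comap_le
  have hC : Measurable C := measurable_pi_lambda _ fun y => (hCmeas y).mono hm le_rfl
  have hC_int (y : 𝒴) : Integrable (fun ω => C ω y) P := integrable_condExp.congr (hCver y).symm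
  have hC_mean : (fun y => ∫ ω, C ω y ∂P) = Qbar := funext fun y => by
    rw [integral_congr_ae (hCver y), integral_condExp hm,
      integral_indicator_const (s := {ω | Y ω = y}) _ (hY (measurableSet_singleton y)),
      smul_eq_mul, mul_one, hQbar, measureReal_def]
  have hSC := integrable_condRisk (μ := P) hℓmeas hSmeas hC hCΔ fun ω => hM _ (hSΔ ω)
  have hCC : Integrable (fun ω => gEntropy ℓ (C ω)) P :=
    integrable_condRisk hℓmeas hC hC hCΔ fun ω => hM _ (hCΔ ω)
  simp only [divg]
  rw [integral_loss_eq_integral_condRisk hm hY hℓmeas (comap_measurable S)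
      (fun ω => hM _ (hSΔ ω)) hCver,
    integral_sub (integrable_condRisk_const_left Qbar hC_int) hCC, integral_sub hSC hCC,
    integral_condRisk_const_left Qbar hC_int, hC_mean, gEntropy]
  ring

/-- uncertainty–resolution–reliability form. For a measurable
`Δ(𝒴)`-valued score `S`, with `C := Q_{σ(S)}` and `Q̄` the marginal law of `Y`,
`E[ℓ(S,Y)] = E_ℓ(Q̄) − E[d_ℓ(Q̄,C)] + E[d_ℓ(S,C)]`. -/
theorem uncertainty_resolution_reliability
    {Ω 𝒴 : Type*} [Fintype 𝒴] [Nonempty 𝒴]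
    [MeasurableSpace 𝒴] [MeasurableSingletonClass 𝒴]
    {mΩ : MeasurableSpace Ω} {P : Measure Ω} [IsProbabilityMeasure P]
    (Y : Ω → 𝒴) (hY : Measurable Y)
    (ℓ : (𝒴 → ℝ) → 𝒴 → ℝ)
    (hℓmeas : ∀ y, Measurable fun p : 𝒴 → ℝ => ℓ p y)
    (hℓbdd : ∃ M : ℝ, ∀ p ∈ simplex 𝒴, ∀ y, |ℓ p y| ≤ M)
    (S : Ω → 𝒴 → ℝ) (hSΔ : ∀ ω, S ω ∈ simplex 𝒴) (hSmeas : Measurable S)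
    (C : Ω → 𝒴 → ℝ) (hCΔ : ∀ ω, C ω ∈ simplex 𝒴)
    (hCmeas : ∀ y, Measurable[MeasurableSpace.comap S inferInstance] fun ω => C ω y)
    (hCver : ∀ y, (fun ω => C ω y)
      =ᵐ[P] P[Set.indicator {ω | Y ω = y} (fun _ => (1 : ℝ))
              | MeasurableSpace.comap S inferInstance])
    (Qbar : 𝒴 → ℝ) (hQbar : ∀ y, Qbar y = (P {ω | Y ω = y}).toReal) :
    ∫ ω, ℓ (S ω) (Y ω) ∂P
      = gEntropy ℓ Qbar - ∫ ω, divg ℓ Qbar (C ω) ∂P + ∫ ω, divg ℓ (S ω) (C ω) ∂P :=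
  uncertainty_resolution_reliability_general (mΩ := mΩ) Y hY ℓ hℓmeas hℓbdd S hSΔ hSmeas C hCΔ
    hCmeas hCver Qbar hQbar
end
end

section
/- Fix ε > 0 and let Δ_ε(𝒴) denote the set of p ∈ Δ(𝒴) with p(y) ≥ ε for all y. Let 𝒜 ⊆ ℬ ⊆ F be nested sub-σ-algebras and let T : Ω → Δ_ε(𝒴) be an 𝒜-measurable random variable. With the conventions 0·log 0 = 0 and 0·log(0/0) = 0, define KL(q‖p) := ∑_{y∈𝒴} q(y) log(q(y)/p(y)) and H(q) := −∑_{y∈𝒴} q(y) log q(y). Then E[−log T(Y)] = E[KL(Q_𝒜 ‖ T)] + E[KL(Q_ℬ ‖ Q_𝒜)] + E[H(Q_ℬ)], where in particular almost surely Q_𝒜(y) = 0 implies Q_ℬ(y) = 0 for every y ∈ 𝒴, so all three terms are well defined and finite. -/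
open MeasureTheory Finset

noncomputable section

/-- Kullback–Leibler divergence `KL(q‖p) := ∑_y q(y) log(q(y)/p(y))`, with the
conventions `0·log 0 = 0` and `0·log(0/0) = 0` (note `Real.log 0 = 0` in Lean). -/
def KLdiv {𝒴 : Type*} [Fintype 𝒴] (q p : 𝒴 → ℝ) : ℝ :=
  ∑ y, q y * Real.log (q y / p y)

/-- Shannon entropy `H(q) := −∑_y q(y) log q(y)`, with the convention `0·log 0 = 0`. -/
def shEntropy {𝒴 : Type*} [Fintype 𝒴] (q : 𝒴 → ℝ) : ℝ :=
  -∑ y, q y * Real.log (q y)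

/-- The ε-interior `Δ_ε(𝒴)` of the simplex: distributions with all coordinates `≥ ε`. -/
def simplexEps (𝒴 : Type*) [Fintype 𝒴] (ε : ℝ) : Set (𝒴 → ℝ) :=
  {p | p ∈ simplex 𝒴 ∧ ∀ y, ε ≤ p y}

section Helpers

variable {Ω : Type*} {mΩ : MeasurableSpace Ω} {P : Measure Ω} [IsProbabilityMeasure P]

lemma neg_mul_log_le_one {x : ℝ} (hx : 0 ≤ x) : -(x * Real.log x) ≤ 1 := by
  rcases eq_or_lt_of_le hx with h | h
  · simp [← h]
  · have h1 := Real.log_le_sub_one_of_pos (inv_pos.mpr h)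
    rw [Real.log_inv] at h1
    have h2 : x * (-Real.log x) ≤ x * (x⁻¹ - 1) :=
      mul_le_mul_of_nonneg_left h1 hx
    rw [mul_sub, mul_inv_cancel₀ (ne_of_gt h), mul_one] at h2
    nlinarith
include mΩ

lemma integrable_of_bdd {f : Ω → ℝ} {c : ℝ} (hf : Measurable[mΩ] f) (hb : ∀ ω, |f ω| ≤ c) :
    Integrable f P :=
  (integrable_const c).mono' hf.aestronglyMeasurable
    (Filter.Eventually.of_forall fun ω => (Real.norm_eq_abs _ ▸ hb ω))

lemma tower_bdd {m : MeasurableSpace Ω} (hm : m ≤ mΩ)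
    {I f g : Ω → ℝ} (hI : Measurable[mΩ] I) (hIb : ∀ ω, |I ω| ≤ 1)
    (hf : f =ᵐ[P] P[I | m])
    (hg : Measurable[m] g) {c : ℝ} (hgb : ∀ ω, |g ω| ≤ c) :
    ∫ ω, f ω * g ω ∂P = ∫ ω, I ω * g ω ∂P := by
  have hgm : Measurable[mΩ] g := hg.mono hm le_rfl
  have hIint : Integrable I P := integrable_of_bdd hI hIb
  have hgIint : Integrable (g * I) P := by
    refine integrable_of_bdd (c := c) (hgm.mul hI) fun ω => ?_
    calc |g ω * I ω| = |g ω| * |I ω| := abs_mul _ _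
    _ ≤ c * 1 := mul_le_mul (hgb ω) (hIb ω) (abs_nonneg _) ((abs_nonneg _).trans (hgb ω))
    _ = c := mul_one c
  have hpull := condExp_mul_of_stronglyMeasurable_left (μ := P) hg.stronglyMeasurable hgIint hIint
  have h1 : ∫ ω, g ω * I ω ∂P = ∫ ω, (P[g * I|m]) ω ∂P := (integral_condExp hm).symm
  have h2 : ∫ ω, (P[g * I|m]) ω ∂P = ∫ ω, g ω * f ω ∂P := by
    refine integral_congr_ae (hpull.trans ?_)
    filter_upwards [hf] with ω hω
    simp [Pi.mul_apply, hω]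
  simp only [mul_comm] at h1 h2 ⊢
  rw [h1, h2]

lemma tower_nonneg {m : MeasurableSpace Ω} (hm : m ≤ mΩ)
    {I f g : Ω → ℝ} (hI : Measurable[mΩ] I) (hI0 : ∀ ω, 0 ≤ I ω) (hI1 : ∀ ω, I ω ≤ 1)
    (hf : f =ᵐ[P] P[I | m]) (hfm : Measurable[mΩ] f) (hf0 : ∀ ω, 0 ≤ f ω) (hf1 : ∀ ω, f ω ≤ 1)
    (hg : Measurable[m] g) (hg0 : ∀ ω, 0 ≤ g ω) :
    ∫⁻ ω, ENNReal.ofReal (f ω * g ω) ∂P = ∫⁻ ω, ENNReal.ofReal (I ω * g ω) ∂P := by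
  have hgm : Measurable[mΩ] g := hg.mono hm le_rfl
  set gn : ℕ → Ω → ℝ := fun n ω => min (g ω) n with hgn
  have hgn_meas : ∀ n, Measurable[m] (gn n) := fun n => hg.min measurable_const
  have hgn0 : ∀ n ω, 0 ≤ gn n ω := fun n ω => le_min (hg0 ω) (Nat.cast_nonneg n)
  have hgnb : ∀ n ω, |gn n ω| ≤ (n : ℝ) := fun n ω => by
    rw [abs_of_nonneg (hgn0 n ω)]; exact min_le_right _ _
  have hreal : ∀ n, ∫ ω, f ω * gn n ω ∂P = ∫ ω, I ω * gn n ω ∂P := fun n =>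
    tower_bdd hm hI (fun ω => by rw [abs_of_nonneg (hI0 ω)]; exact hI1 ω) hf
      (hgn_meas n) (hgnb n)
  have hfin : ∀ (h : Ω → ℝ), (∀ ω, 0 ≤ h ω) → (∀ ω, h ω ≤ 1) → ∀ n,
      ∫⁻ ω, ENNReal.ofReal (h ω * gn n ω) ∂P ≠ ⊤ := by
    intro h h0 hb n
    refine ne_of_lt (lt_of_le_of_lt (lintegral_mono (g := fun _ => ENNReal.ofReal n) ?_) ?_)
    · intro ω
      refine ENNReal.ofReal_le_ofReal ?_
      calc h ω * gn n ω ≤ 1 * gn n ω := mul_le_mul_of_nonneg_right (hb ω) (hgn0 n ω)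
      _ = gn n ω := one_mul _
      _ ≤ n := min_le_right _ _
    · simp [lintegral_const]
  have hlin : ∀ n, ∫⁻ ω, ENNReal.ofReal (f ω * gn n ω) ∂P
      = ∫⁻ ω, ENNReal.ofReal (I ω * gn n ω) ∂P := by
    intro n
    have h1 : ∫ ω, f ω * gn n ω ∂P = (∫⁻ ω, ENNReal.ofReal (f ω * gn n ω) ∂P).toReal := by
      rw [integral_eq_lintegral_of_nonneg_ae
        (Filter.Eventually.of_forall fun ω => mul_nonneg (hf0 ω) (hgn0 n ω))
        ((hfm.mul ((hgn_meas n).mono hm le_rfl)).aestronglyMeasurable)]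
    have h2 : ∫ ω, I ω * gn n ω ∂P = (∫⁻ ω, ENNReal.ofReal (I ω * gn n ω) ∂P).toReal := by
      rw [integral_eq_lintegral_of_nonneg_ae
        (Filter.Eventually.of_forall fun ω => mul_nonneg (hI0 ω) (hgn0 n ω))
        ((hI.mul ((hgn_meas n).mono hm le_rfl)).aestronglyMeasurable)]
    have h3 := hreal n
    rw [h1, h2] at h3
    exact (ENNReal.toReal_eq_toReal_iff' (hfin f hf0 hf1 n) (hfin I hI0 hI1 n)).mp h3
  have hsup : ∀ (h : Ω → ℝ), (∀ ω, 0 ≤ h ω) → Measurable[mΩ] h →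
      ∫⁻ ω, ENNReal.ofReal (h ω * g ω) ∂P
        = ⨆ n, ∫⁻ ω, ENNReal.ofReal (h ω * gn n ω) ∂P := by
    intro h h0 hmeas
    rw [← lintegral_iSup]
    · refine lintegral_congr fun ω => ?_
      refine le_antisymm ?_ (iSup_le fun n => ENNReal.ofReal_le_ofReal
        (mul_le_mul_of_nonneg_left (min_le_left _ _) (h0 ω)))
      have heq : gn ⌈g ω⌉₊ ω = g ω := min_eq_left (Nat.le_ceil _)
      calc ENNReal.ofReal (h ω * g ω) = ENNReal.ofReal (h ω * gn ⌈g ω⌉₊ ω) := by rw [heq]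
      _ ≤ ⨆ n, ENNReal.ofReal (h ω * gn n ω) :=
          le_iSup (fun n => ENNReal.ofReal (h ω * gn n ω)) _
    · exact fun n => (hmeas.mul ((hgn_meas n).mono hm le_rfl)).ennreal_ofReal
    · intro i j hij ω
      exact ENNReal.ofReal_le_ofReal (mul_le_mul_of_nonneg_left
        (min_le_min le_rfl (Nat.cast_le.mpr hij)) (h0 ω))
  rw [hsup f hf0 hfm, hsup I hI0 hI]
  exact iSup_congr hlin

lemma ae_zero_of_condexp_eq {m : MeasurableSpace Ω} (hm : m ≤ mΩ)
    {f a : Ω → ℝ} (hf0 : ∀ ω, 0 ≤ f ω) (hfi : Integrable f P)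
    (ham : Measurable[m] a) (ha : P[f|m] =ᵐ[P] a) :
    ∀ᵐ ω ∂P, a ω = 0 → f ω = 0 := by
  set A : Set Ω := a ⁻¹' {0} with hA
  have hAm : MeasurableSet[m] A := ham (measurableSet_singleton 0)
  have hAmΩ : MeasurableSet[mΩ] A := hm A hAm
  have h1 : ∫ ω in A, f ω ∂P = 0 := by
    rw [← setIntegral_condExp hm hfi hAm]
    have h2 : ∫ ω in A, (P[f|m]) ω ∂P = ∫ ω in A, a ω ∂P :=
      integral_congr_ae (ae_restrict_of_ae ha)
    rw [h2]
    have h3 : ∀ᵐ ω ∂(P.restrict A), a ω = 0 :=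
      (ae_restrict_iff' hAmΩ).mpr (Filter.Eventually.of_forall fun ω hω => hω)
    calc ∫ ω in A, a ω ∂P = ∫ _ω in A, (0:ℝ) ∂P := integral_congr_ae h3
    _ = 0 := by simp
  have h4 : f =ᵐ[P.restrict A] 0 :=
    (integral_eq_zero_iff_of_nonneg (fun ω => hf0 ω) hfi.restrict).mp h1
  have h5 := (ae_restrict_iff' hAmΩ).mp h4
  filter_upwards [h5] with ω hω ha0
  exact hω ha0

lemma integrable_of_lintegral_ofReal_ne_top {f : Ω → ℝ} (hf : Measurable[mΩ] f)
    (hf0 : ∀ ω, 0 ≤ f ω) (h : ∫⁻ ω, ENNReal.ofReal (f ω) ∂P ≠ ⊤) :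
    Integrable f P := by
  refine ⟨hf.aestronglyMeasurable, ?_⟩
  rw [hasFiniteIntegral_iff_ofReal (Filter.Eventually.of_forall hf0)]
  exact lt_top_iff_ne_top.mpr h

end Helpers

/-- log-loss: entropies and information. For `𝒜 ⊆ ℬ ⊆ F` and an
`𝒜`-measurable predictor `T` with values in `Δ_ε(𝒴)` (`ε > 0`),
`E[−log T(Y)] = E[KL(Q_𝒜‖T)] + E[KL(Q_ℬ‖Q_𝒜)] + E[H(Q_ℬ)]`; in particular, almost
surely `Q_𝒜(y) = 0` implies `Q_ℬ(y) = 0` for every `y`, so all terms are well defined. -/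
theorem logloss_chain_decomposition
    {Ω 𝒴 : Type*} [Fintype 𝒴] [Nonempty 𝒴]
    [MeasurableSpace 𝒴] [MeasurableSingletonClass 𝒴]
    {mΩ : MeasurableSpace Ω} {P : Measure Ω} [IsProbabilityMeasure P]
    (Y : Ω → 𝒴) (hY : Measurable Y)
    {ε : ℝ} (hε : 0 < ε)
    {𝒜 ℬ : MeasurableSpace Ω} (h𝒜ℬ : 𝒜 ≤ ℬ) (hℬ : ℬ ≤ mΩ)
    (T : Ω → 𝒴 → ℝ) (hTΔ : ∀ ω, T ω ∈ simplexEps 𝒴 ε)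
    (hTmeas : ∀ y, Measurable[𝒜] fun ω => T ω y)
    (Q𝒜 : Ω → 𝒴 → ℝ) (hQ𝒜Δ : ∀ ω, Q𝒜 ω ∈ simplex 𝒴)
    (hQ𝒜meas : ∀ y, Measurable[𝒜] fun ω => Q𝒜 ω y)
    (hQ𝒜ver : ∀ y, (fun ω => Q𝒜 ω y)
      =ᵐ[P] P[Set.indicator {ω | Y ω = y} (fun _ => (1 : ℝ)) | 𝒜])
    (Qℬ : Ω → 𝒴 → ℝ) (hQℬΔ : ∀ ω, Qℬ ω ∈ simplex 𝒴)
    (hQℬmeas : ∀ y, Measurable[ℬ] fun ω => Qℬ ω y)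
    (hQℬver : ∀ y, (fun ω => Qℬ ω y)
      =ᵐ[P] P[Set.indicator {ω | Y ω = y} (fun _ => (1 : ℝ)) | ℬ]) :
    (∀ᵐ ω ∂P, ∀ y, Q𝒜 ω y = 0 → Qℬ ω y = 0) ∧
    ∫ ω, -Real.log (T ω (Y ω)) ∂P
      = ∫ ω, KLdiv (Q𝒜 ω) (T ω) ∂P + ∫ ω, KLdiv (Qℬ ω) (Q𝒜 ω) ∂P
        + ∫ ω, shEntropy (Qℬ ω) ∂P := by
  
  classical
  have h𝒜 : 𝒜 ≤ mΩ := h𝒜ℬ.trans hℬ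
  set I : 𝒴 → Ω → ℝ := fun y => Set.indicator {ω | Y ω = y} (fun _ => (1 : ℝ)) with hIdef
  have hsetm : ∀ y, MeasurableSet[mΩ] {ω | Y ω = y} := fun y => hY (measurableSet_singleton y)
  have hImeas : ∀ y, Measurable[mΩ] (I y) := fun y =>
    measurable_const.indicator (hsetm y)
  have hI0 : ∀ y ω, 0 ≤ I y ω := fun y ω => Set.indicator_nonneg (fun _ _ => zero_le_one) ω
  have hI1 : ∀ y ω, I y ω ≤ 1 := fun y ω => by
    by_cases h : ω ∈ {ω | Y ω = y}
    · rw [hIdef]; simp [Set.indicator_of_mem h]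
    · rw [hIdef]; simp [Set.indicator_of_notMem h]
  -- coordinate bounds
  have ha0 : ∀ ω y, 0 ≤ Q𝒜 ω y := fun ω y => (hQ𝒜Δ ω).1 y
  have ha1 : ∀ ω y, Q𝒜 ω y ≤ 1 := fun ω y => by
    calc Q𝒜 ω y ≤ ∑ z, Q𝒜 ω z :=
      Finset.single_le_sum (fun z _ => (hQ𝒜Δ ω).1 z) (mem_univ y)
    _ = 1 := (hQ𝒜Δ ω).2
  have hb0 : ∀ ω y, 0 ≤ Qℬ ω y := fun ω y => (hQℬΔ ω).1 y
  have hb1 : ∀ ω y, Qℬ ω y ≤ 1 := fun ω y => by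
    calc Qℬ ω y ≤ ∑ z, Qℬ ω z :=
      Finset.single_le_sum (fun z _ => (hQℬΔ ω).1 z) (mem_univ y)
    _ = 1 := (hQℬΔ ω).2
  have htε : ∀ ω y, ε ≤ T ω y := fun ω y => (hTΔ ω).2 y
  have ht0 : ∀ ω y, 0 < T ω y := fun ω y => lt_of_lt_of_le hε (htε ω y)
  have ht1 : ∀ ω y, T ω y ≤ 1 := fun ω y => by
    calc T ω y ≤ ∑ z, T ω z :=
      Finset.single_le_sum (fun z _ => (hTΔ ω).1.1 z) (mem_univ y)
    _ = 1 := (hTΔ ω).1.2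
  -- measurability wrt mΩ
  have ham : ∀ y, Measurable[mΩ] fun ω => Q𝒜 ω y := fun y => (hQ𝒜meas y).mono h𝒜 le_rfl
  have hbm : ∀ y, Measurable[mΩ] fun ω => Qℬ ω y := fun y => (hQℬmeas y).mono hℬ le_rfl
  have htm : ∀ y, Measurable[mΩ] fun ω => T ω y := fun y => (hTmeas y).mono h𝒜 le_rfl
  -- Qℬ integrable
  have hbint : ∀ y, Integrable (fun ω => Qℬ ω y) P := fun y =>
    integrable_of_bdd (hbm y) (fun ω => by rw [abs_of_nonneg (hb0 ω y)]; exact hb1 ω y)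
  -- conditional expectation of Qℬ given 𝒜 is Q𝒜
  have hcond : ∀ y, P[fun ω => Qℬ ω y | 𝒜] =ᵐ[P] fun ω => Q𝒜 ω y := fun y =>
    (condExp_congr_ae (hQℬver y)).trans
      ((condExp_condExp_of_le h𝒜ℬ hℬ).trans (hQ𝒜ver y).symm)
  -- Part 1
  have part1y : ∀ y, ∀ᵐ ω ∂P, Q𝒜 ω y = 0 → Qℬ ω y = 0 := fun y =>
    ae_zero_of_condexp_eq h𝒜 (fun ω => hb0 ω y) (hbint y) (hQ𝒜meas y) (hcond y)
  have part1 : ∀ᵐ ω ∂P, ∀ y, Q𝒜 ω y = 0 → Qℬ ω y = 0 := ae_all_iff.mpr part1y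
  refine ⟨part1, ?_⟩
  -- ===== Part 2 =====
  have hlogT : ∀ ω y, |Real.log (T ω y)| ≤ |Real.log ε| := by
    intro ω y
    rw [abs_of_nonpos (Real.log_nonpos (ht0 ω y).le (ht1 ω y))]
    exact le_trans (neg_le_neg (Real.log_le_log hε (htε ω y))) (neg_le_abs _)
  have habs1 : ∀ (x : ℝ), 0 ≤ x → x ≤ 1 → |x * Real.log x| ≤ 1 := by
    intro x h0 h1
    rw [abs_of_nonpos (mul_nonpos_of_nonneg_of_nonpos h0 (Real.log_nonpos h0 h1))]
    exact neg_mul_log_le_one h0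
  have intAA : ∀ y, Integrable (fun ω => Q𝒜 ω y * Real.log (Q𝒜 ω y)) P := fun y =>
    integrable_of_bdd (c := 1) ((ham y).mul (Real.measurable_log.comp (ham y)))
      (fun ω => habs1 _ (ha0 ω y) (ha1 ω y))
  have intBB : ∀ y, Integrable (fun ω => Qℬ ω y * Real.log (Qℬ ω y)) P := fun y =>
    integrable_of_bdd (c := 1) ((hbm y).mul (Real.measurable_log.comp (hbm y)))
      (fun ω => habs1 _ (hb0 ω y) (hb1 ω y))
  have intAT : ∀ y, Integrable (fun ω => Q𝒜 ω y * Real.log (T ω y)) P := fun y =>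
    integrable_of_bdd (c := |Real.log ε|) ((ham y).mul (Real.measurable_log.comp (htm y)))
      (fun ω => by
        rw [abs_mul]
        have h1 : |Q𝒜 ω y| ≤ 1 := by rw [abs_of_nonneg (ha0 ω y)]; exact ha1 ω y
        nlinarith [hlogT ω y, abs_nonneg (Q𝒜 ω y), abs_nonneg (Real.log (T ω y)),
          abs_nonneg (Real.log ε)])
  have intIT : ∀ y, Integrable (fun ω => I y ω * Real.log (T ω y)) P := fun y =>
    integrable_of_bdd (c := |Real.log ε|) ((hImeas y).mul (Real.measurable_log.comp (htm y)))
      (fun ω => by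
        rw [abs_mul]
        have h1 : |I y ω| ≤ 1 := by rw [abs_of_nonneg (hI0 y ω)]; exact hI1 y ω
        nlinarith [hlogT ω y, abs_nonneg (I y ω), abs_nonneg (Real.log (T ω y)),
          abs_nonneg (Real.log ε)])
  have towerT : ∀ y, ∫ ω, Q𝒜 ω y * Real.log (T ω y) ∂P
      = ∫ ω, I y ω * Real.log (T ω y) ∂P :=
    fun y => tower_bdd h𝒜 (hImeas y)
      (fun ω => by rw [abs_of_nonneg (hI0 y ω)]; exact hI1 y ω) (hQ𝒜ver y)
      (Real.measurable_log.comp (hTmeas y)) (fun ω => hlogT ω y)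
  have hg'meas : ∀ y, Measurable[𝒜] fun ω => -Real.log (Q𝒜 ω y) := fun y =>
    (Real.measurable_log.comp (hQ𝒜meas y)).neg
  have hg'0 : ∀ y ω, 0 ≤ -Real.log (Q𝒜 ω y) := fun y ω =>
    neg_nonneg.mpr (Real.log_nonpos (ha0 ω y) (ha1 ω y))
  have LB : ∀ y, ∫⁻ ω, ENNReal.ofReal (Qℬ ω y * -Real.log (Q𝒜 ω y)) ∂P
      = ∫⁻ ω, ENNReal.ofReal (I y ω * -Real.log (Q𝒜 ω y)) ∂P := fun y =>
    tower_nonneg hℬ (hImeas y) (hI0 y) (hI1 y) (hQℬver y) (hbm y)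
      (fun ω => hb0 ω y) (fun ω => hb1 ω y) ((hg'meas y).mono h𝒜ℬ le_rfl) (hg'0 y)
  have LA : ∀ y, ∫⁻ ω, ENNReal.ofReal (Q𝒜 ω y * -Real.log (Q𝒜 ω y)) ∂P
      = ∫⁻ ω, ENNReal.ofReal (I y ω * -Real.log (Q𝒜 ω y)) ∂P := fun y =>
    tower_nonneg h𝒜 (hImeas y) (hI0 y) (hI1 y) (hQ𝒜ver y) (ham y)
      (fun ω => ha0 ω y) (fun ω => ha1 ω y) (hg'meas y) (hg'0 y)
  have LAfin : ∀ y, ∫⁻ ω, ENNReal.ofReal (Q𝒜 ω y * -Real.log (Q𝒜 ω y)) ∂P ≠ ⊤ := by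
    intro y
    refine ne_of_lt (lt_of_le_of_lt (lintegral_mono (g := fun _ => (1 : ENNReal)) ?_) ?_)
    · intro ω
      calc ENNReal.ofReal (Q𝒜 ω y * -Real.log (Q𝒜 ω y))
          ≤ ENNReal.ofReal 1 := ENNReal.ofReal_le_ofReal
            (by rw [mul_neg]; exact neg_mul_log_le_one (ha0 ω y))
      _ = 1 := ENNReal.ofReal_one
    · simp [lintegral_const]
  have LBfin : ∀ y, ∫⁻ ω, ENNReal.ofReal (Qℬ ω y * -Real.log (Q𝒜 ω y)) ∂P ≠ ⊤ :=
    fun y => by rw [LB y, ← LA y]; exact LAfin y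
  have measBA : ∀ y, Measurable[mΩ] fun ω => Qℬ ω y * -Real.log (Q𝒜 ω y) := fun y =>
    (hbm y).mul ((hg'meas y).mono h𝒜 le_rfl)
  have measAA' : ∀ y, Measurable[mΩ] fun ω => Q𝒜 ω y * -Real.log (Q𝒜 ω y) := fun y =>
    (ham y).mul ((hg'meas y).mono h𝒜 le_rfl)
  have intBA : ∀ y, Integrable (fun ω => Qℬ ω y * Real.log (Q𝒜 ω y)) P := by
    intro y
    have h := (integrable_of_lintegral_ofReal_ne_top (measBA y)
      (fun ω => mul_nonneg (hb0 ω y) (hg'0 y ω)) (LBfin y)).neg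
    refine h.congr (Filter.Eventually.of_forall fun ω => ?_)
    simp
  have Ieq : ∀ y, ∫ ω, Qℬ ω y * Real.log (Q𝒜 ω y) ∂P
      = ∫ ω, Q𝒜 ω y * Real.log (Q𝒜 ω y) ∂P := by
    intro y
    have e1 : ∫ ω, Qℬ ω y * -Real.log (Q𝒜 ω y) ∂P
        = ∫ ω, Q𝒜 ω y * -Real.log (Q𝒜 ω y) ∂P := by
      rw [integral_eq_lintegral_of_nonneg_ae
          (Filter.Eventually.of_forall fun ω => mul_nonneg (hb0 ω y) (hg'0 y ω))
          (measBA y).aestronglyMeasurable,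
        integral_eq_lintegral_of_nonneg_ae
          (Filter.Eventually.of_forall fun ω => mul_nonneg (ha0 ω y) (hg'0 y ω))
          (measAA' y).aestronglyMeasurable,
        LB y, ← LA y]
    simp only [mul_neg, integral_neg] at e1
    exact neg_injective e1
  -- LHS expansion
  have hLHSpt : ∀ ω, Real.log (T ω (Y ω)) = ∑ y, I y ω * Real.log (T ω y) := by
    intro ω
    rw [Finset.sum_eq_single (Y ω)]
    · simp only [hIdef]
      rw [Set.indicator_of_mem (show ω ∈ {ω' | Y ω' = Y ω} from rfl)]
      rw [one_mul]
    · intro b _ hb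
      simp only [hIdef]
      rw [Set.indicator_of_notMem (show ω ∉ {ω' | Y ω' = b} from fun h => hb (Eq.symm h))]
      rw [zero_mul]
    · intro h; exact absurd (mem_univ _) h
  have hLHS : ∫ ω, -Real.log (T ω (Y ω)) ∂P
      = -∑ y, ∫ ω, I y ω * Real.log (T ω y) ∂P := by
    have h1 : ∫ ω, -Real.log (T ω (Y ω)) ∂P
        = ∫ ω, -∑ y, I y ω * Real.log (T ω y) ∂P :=
      integral_congr_ae (Filter.Eventually.of_forall fun ω => congrArg Neg.neg (hLHSpt ω))
    rw [h1, integral_neg, integral_finset_sum _ (fun y _ => intIT y)]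
  -- KL(Q𝒜, T) expansion
  have hKL1 : ∫ ω, KLdiv (Q𝒜 ω) (T ω) ∂P
      = ∑ y, (∫ ω, Q𝒜 ω y * Real.log (Q𝒜 ω y) ∂P
          - ∫ ω, Q𝒜 ω y * Real.log (T ω y) ∂P) := by
    have hpt : ∀ ω, KLdiv (Q𝒜 ω) (T ω)
        = ∑ y, (Q𝒜 ω y * Real.log (Q𝒜 ω y) - Q𝒜 ω y * Real.log (T ω y)) := by
      intro ω
      unfold KLdiv
      refine Finset.sum_congr rfl fun y _ => ?_
      rcases eq_or_lt_of_le (ha0 ω y) with h | h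
      · simp [← h]
      · rw [Real.log_div (ne_of_gt h) (ne_of_gt (ht0 ω y)), mul_sub]
    refine (integral_congr_ae (Filter.Eventually.of_forall hpt)).trans ?_
    rw [integral_finset_sum]
    · exact Finset.sum_congr rfl fun y _ => integral_sub (intAA y) (intAT y)
    · exact fun y _ => (intAA y).sub (intAT y)
  -- KL(Qℬ, Q𝒜) expansion (a.e., using part 1)
  have hKL2 : ∫ ω, KLdiv (Qℬ ω) (Q𝒜 ω) ∂P
      = ∑ y, (∫ ω, Qℬ ω y * Real.log (Qℬ ω y) ∂P
          - ∫ ω, Qℬ ω y * Real.log (Q𝒜 ω y) ∂P) := by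
    have hpt : ∀ᵐ ω ∂P, KLdiv (Qℬ ω) (Q𝒜 ω)
        = ∑ y, (Qℬ ω y * Real.log (Qℬ ω y) - Qℬ ω y * Real.log (Q𝒜 ω y)) := by
      filter_upwards [part1] with ω hω
      unfold KLdiv
      refine Finset.sum_congr rfl fun y _ => ?_
      rcases eq_or_lt_of_le (hb0 ω y) with h | h
      · simp [← h]
      · have hane : Q𝒜 ω y ≠ 0 := fun h0 => absurd (hω y h0) (ne_of_gt h)
        rw [Real.log_div (ne_of_gt h) hane, mul_sub]
    refine (integral_congr_ae hpt).trans ?_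
    rw [integral_finset_sum]
    · exact Finset.sum_congr rfl fun y _ => integral_sub (intBB y) (intBA y)
    · exact fun y _ => (intBB y).sub (intBA y)
  -- entropy expansion
  have hH : ∫ ω, shEntropy (Qℬ ω) ∂P = -∑ y, ∫ ω, Qℬ ω y * Real.log (Qℬ ω y) ∂P := by
    simp only [shEntropy]
    rw [integral_neg, integral_finset_sum _ (fun y _ => intBB y)]
  -- final assembly
  rw [hLHS, hKL1, hKL2, hH, ← Finset.sum_neg_distrib, ← Finset.sum_neg_distrib,
    ← Finset.sum_add_distrib, ← Finset.sum_add_distrib]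
  refine Finset.sum_congr rfl fun y _ => ?_
  rw [Ieq y, towerT y]
  ring
end
end
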